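/- Under hyper-generalized recurrence with recurrence 1-forms A and B, if r = 0, then (A + (n−2)B)(Ric₀ X) = 0 for all X ∈ V, i.e. the 1-form (A + (n−2)B) annihilates the image of the Ricci operator. (Content of Theorem 2.5(a).) -/

import Mathlib

/-!
Contract the second Bianchi identity in the slots `(X, W)` and `(Z, U)` against the dual bases.
For a tensor `T` antisymmetric in both pairs, the contracted cyclic sum of `α ⊗ T` is
`2 Ric_T(Y, α♯) - α(Y) tr Ric_T`, with `Ric_T` the Ricci contraction of `T`. For `T = R` this is
`2 A(Ric₀ Y) - r A(Y)`; since the Ricci contraction of `g ∧ Ric` is `(n - 2) Ric + r g`, for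
`T = g ∧ Ric` it is `2 (n - 2) (B(Ric₀ Y) - r B(Y))`. Hence
`2 (A + (n - 2) B)(Ric₀ Y) = r (A + 2 (n - 2) B)(Y)`, and the right side vanishes when `r = 0`.
-/

open scoped BigOperators

/-- Kulkarni–Nomizu product of two bilinear forms (as real-valued functions). -/
def KN {V : Type*} (h k : V → V → ℝ) (X Y Z W : V) : ℝ :=
  h X Z * k Y W + h Y W * k X Z - h X W * k Y Z - h Y Z * k X W

/-- The tensor `G(X,Y,Z,W) = g(X,Z)g(Y,W) - g(Y,Z)g(X,W)`. -/
def Gten {V : Type*} (g : V → V → ℝ) (X Y Z W : V) : ℝ :=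
  g X Z * g Y W - g Y Z * g X W

/-- Derivation action of the curvature endomorphism `Rend U V` on a quadrilinear form `T`. -/
def derAct {V : Type*} (Rend : V → V → V → V) (T : V → V → V → V → ℝ)
    (U V' X Y Z W : V) : ℝ :=
  - T (Rend U V' X) Y Z W - T X (Rend U V' Y) Z W
    - T X Y (Rend U V' Z) W - T X Y Z (Rend U V' W)

theorem KN_antisymm_left {V : Type*} (h k : V → V → ℝ) (X Y Z W : V) :
    KN h k X Y Z W = -KN h k Y X Z W := by
  unfold KN; ring

theorem KN_antisymm_right {V : Type*} (h k : V → V → ℝ) (X Y Z W : V) :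
    KN h k X Y Z W = -KN h k X Y W Z := by
  unfold KN; ring

open Finset

noncomputable section DualBasis

variable {V : Type*} [AddCommGroup V] [Module ℝ V] {n : ℕ}
  (b : Module.Basis (Fin n) ℝ V) (e' : Fin n → V)

def ricciContraction (T : V → V → V → V → ℝ) (X Z : V) : ℝ :=
  ∑ i, T X (b i) Z (e' i)

def traceForm (h : V → V → ℝ) : ℝ :=
  ∑ i, h (b i) (e' i)

-- The cyclic sum over `X, Y, Z` of `α X * T Y Z W U`, contracted at `X = b j, W = e' j` and
-- `Z = b i, U = e' i`.
def cyclicContraction (α : V → ℝ) (T : V → V → V → V → ℝ) (Y : V) : ℝ :=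
  ∑ j, ∑ i, (α (b j) * T Y (b i) (e' j) (e' i) + α Y * T (b i) (b j) (e' j) (e' i)
    + α (b i) * T (b j) Y (e' j) (e' i))

variable {b e'} {g : V →ₗ[ℝ] V →ₗ[ℝ] ℝ}

theorem apply_dual_eq_repr (hdual : ∀ i j, g (b i) (e' j) = if i = j then 1 else 0)
    (X : V) (j : Fin n) : g X (e' j) = b.repr X j := by
  have : g.flip (e' j) = b.coord j := b.ext fun i => by
    simp [hdual, Finsupp.single_apply]
  exact LinearMap.congr_fun this X

theorem sum_apply_dual_smul {M : Type*} [AddCommGroup M] [Module ℝ M]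
    (hdual : ∀ i j, g (b i) (e' j) = if i = j then 1 else 0) (φ : V →ₗ[ℝ] M) (X : V) :
    ∑ i, g X (e' i) • φ (b i) = φ X := by
  conv_rhs => rw [← b.sum_repr X]
  simp only [apply_dual_eq_repr hdual, map_sum, map_smul]

theorem sum_apply_mul_apply_dual (hdual : ∀ i j, g (b i) (e' j) = if i = j then 1 else 0)
    (α : V →ₗ[ℝ] ℝ) (X : V) : ∑ i, α (b i) * g X (e' i) = α X := by
  simpa only [smul_eq_mul, mul_comm] using sum_apply_dual_smul hdual α X

theorem sum_apply_basis_dual_self (hdual : ∀ i j, g (b i) (e' j) = if i = j then 1 else 0) :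
    ∑ i, g (b i) (e' i) = n := by
  simp [hdual]

theorem cyclicContraction_eq {T : V → V → V → V → ℝ}
    (hT₁ : ∀ X Y Z W, T X Y Z W = -T Y X Z W) (hT₂ : ∀ X Y Z W, T X Y Z W = -T X Y W Z)
    (α : V → ℝ) (Y : V) :
    cyclicContraction b e' α T Y =
      2 * ∑ j, α (b j) * ricciContraction b e' T Y (e' j)
        - α Y * traceForm b e' (ricciContraction b e' T) := by
  have h₁ : ∑ j, ∑ i, α (b j) * T Y (b i) (e' j) (e' i)
      = ∑ j, α (b j) * ricciContraction b e' T Y (e' j) := by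
    simp only [ricciContraction, mul_sum]
  have h₃ : ∑ j, ∑ i, α (b i) * T (b j) Y (e' j) (e' i)
      = ∑ j, α (b j) * ricciContraction b e' T Y (e' j) := by
    rw [sum_comm]
    simp only [ricciContraction, mul_sum]
    refine sum_congr rfl fun j _ => sum_congr rfl fun i _ => ?_
    rw [hT₁, hT₂, neg_neg]
  have h₂ : ∑ j, ∑ i, α Y * T (b i) (b j) (e' j) (e' i)
      = -(α Y * traceForm b e' (ricciContraction b e' T)) := by
    rw [sum_comm]
    simp only [traceForm, ricciContraction, mul_sum, ← sum_neg_distrib]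
    refine sum_congr rfl fun j _ => sum_congr rfl fun i _ => ?_
    rw [hT₂, mul_neg]
  simp only [cyclicContraction, sum_add_distrib, h₁, h₂, h₃]
  ring

theorem ricciContraction_KN (hdual : ∀ i j, g (b i) (e' j) = if i = j then 1 else 0)
    (h : V →ₗ[ℝ] V →ₗ[ℝ] ℝ) (X : V) (j : Fin n) :
    ricciContraction b e' (KN (fun X Y => g X Y) (fun X Y => h X Y)) X (e' j)
      = (n - 2) * h X (e' j) + traceForm b e' (fun X Y => h X Y) * g X (e' j) := by
  have expand : ∑ i, g X (e' i) * h (b i) (e' j) = h X (e' j) :=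
    sum_apply_dual_smul hdual (h.flip (e' j)) X
  have delta : ∑ i, g (b i) (e' j) * h X (e' i) = h X (e' j) := by
    simp [hdual]
  have trace : ∑ i, g (b i) (e' i) * h X (e' j) = n * h X (e' j) := by
    rw [← sum_mul, sum_apply_basis_dual_self hdual]
  simp only [ricciContraction, KN, sum_sub_distrib, sum_add_distrib, expand, delta, trace,
    traceForm, ← mul_sum]
  ring

theorem cyclicContraction_KN (hdual : ∀ i j, g (b i) (e' j) = if i = j then 1 else 0)
    (h : V →ₗ[ℝ] V →ₗ[ℝ] ℝ) (α : V →ₗ[ℝ] ℝ) (Y : V) :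
    cyclicContraction b e' α (KN (fun X Y => g X Y) (fun X Y => h X Y)) Y
      = 2 * (n - 2) * (∑ j, α (b j) * h Y (e' j) - traceForm b e' (fun X Y => h X Y) * α Y) := by
  have hK_trace : traceForm b e' (ricciContraction b e' (KN (fun X Y => g X Y)
      (fun X Y => h X Y))) = (n - 2) * traceForm b e' (fun X Y => h X Y)
        + traceForm b e' (fun X Y => h X Y) * n := by
    simp only [traceForm, ricciContraction_KN hdual, sum_add_distrib, ← mul_sum,
      sum_apply_basis_dual_self hdual]
  have hK_sum : ∑ j, α (b j) * ricciContraction b e' (KN (fun X Y => g X Y)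
      (fun X Y => h X Y)) Y (e' j)
        = (n - 2) * ∑ j, α (b j) * h Y (e' j) + traceForm b e' (fun X Y => h X Y) * α Y := by
    simp only [ricciContraction_KN hdual, mul_add, mul_left_comm _ (n - 2 : ℝ),
      mul_left_comm _ (traceForm _ _ _), sum_add_distrib, ← mul_sum,
      sum_apply_mul_apply_dual hdual]
  rw [cyclicContraction_eq (KN_antisymm_left _ _) (KN_antisymm_right _ _), hK_trace, hK_sum]
  ring

end DualBasis

theorem hgr_contracted_bianchi {V : Type*} [AddCommGroup V] [Module ℝ V] {n : ℕ}
    {b : Module.Basis (Fin n) ℝ V} {e' : Fin n → V} {g : V →ₗ[ℝ] V →ₗ[ℝ] ℝ}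
    (hdual : ∀ i j, g (b i) (e' j) = if i = j then 1 else 0)
    {R : V →ₗ[ℝ] V →ₗ[ℝ] V →ₗ[ℝ] V →ₗ[ℝ] ℝ}
    (hR_anti : ∀ X Y Z W, R X Y Z W = - R Y X Z W)
    (hR_pair : ∀ X Y Z W, R X Y Z W = R Z W X Y)
    {Ric : V → V → ℝ} (hRic : ∀ X Z, Ric X Z = ∑ i, R X (b i) Z (e' i))
    {Ric₀ : V →ₗ[ℝ] V} (hRic₀ : ∀ X Y, g (Ric₀ X) Y = Ric X Y)
    {D : V →ₗ[ℝ] V →ₗ[ℝ] V →ₗ[ℝ] V →ₗ[ℝ] V →ₗ[ℝ] ℝ}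
    (hBianchi : ∀ X Y Z W U, D X Y Z W U + D Y Z X W U + D Z X Y W U = 0)
    {A B : V →ₗ[ℝ] ℝ}
    (hHGR : ∀ U X Y Z W,
      D U X Y Z W = A U * R X Y Z W + B U * KN (fun a c => g a c) Ric X Y Z W)
    (Y : V) :
    2 * (A (Ric₀ Y) + (n - 2) * B (Ric₀ Y))
      = traceForm b e' Ric * (A Y + 2 * (n - 2) * B Y) := by
  have hR_anti_right : ∀ X Y Z W, R X Y Z W = - R X Y W Z := fun X Y Z W => by
    rw [hR_pair, hR_anti, hR_pair]
  have hcontract : cyclicContraction b e' A (fun X Y Z W => R X Y Z W) Y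
      + cyclicContraction b e' B (KN (fun a c => g a c) Ric) Y = 0 := by
    simp only [cyclicContraction, ← sum_add_distrib]
    refine sum_eq_zero fun j _ => sum_eq_zero fun i _ => ?_
    have h := hBianchi (b j) Y (b i) (e' j) (e' i)
    rw [hHGR, hHGR, hHGR] at h
    linarith
  have hRicR : ricciContraction b e' (fun X Y Z W => R X Y Z W) = Ric :=
    funext₂ fun X Z => (hRic X Z).symm
  rw [cyclicContraction_eq hR_anti hR_anti_right, hRicR] at hcontract
  obtain rfl : Ric = fun X Z => (g ∘ₗ Ric₀) X Z := (funext₂ hRic₀).symm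
  rw [cyclicContraction_KN hdual] at hcontract
  simp only [LinearMap.comp_apply, sum_apply_mul_apply_dual hdual] at hcontract
  linear_combination hcontract

theorem hgr_zero_scalar_annihilates_ricci_image_general {V : Type*} [AddCommGroup V] [Module ℝ V]
    (n : ℕ)
    (b : Module.Basis (Fin n) ℝ V) (e' : Fin n → V)
    (g : V →ₗ[ℝ] V →ₗ[ℝ] ℝ)
    (hdual : ∀ i j, g (b i) (e' j) = if i = j then (1 : ℝ) else 0)
    (R : V →ₗ[ℝ] V →ₗ[ℝ] V →ₗ[ℝ] V →ₗ[ℝ] ℝ)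
    (hR_anti : ∀ X Y Z W, R X Y Z W = - R Y X Z W)
    (hR_pair : ∀ X Y Z W, R X Y Z W = R Z W X Y)
    (Ric : V → V → ℝ)
    (hRic : ∀ X Z, Ric X Z = ∑ i, R X (b i) Z (e' i))
    (r : ℝ) (hr : r = ∑ i, Ric (b i) (e' i))
    (Ric₀ : V →ₗ[ℝ] V)
    (hRic₀ : ∀ X Y, g (Ric₀ X) Y = Ric X Y)
    (D : V →ₗ[ℝ] V →ₗ[ℝ] V →ₗ[ℝ] V →ₗ[ℝ] V →ₗ[ℝ] ℝ)
    (hBianchi : ∀ X Y Z W U, D X Y Z W U + D Y Z X W U + D Z X Y W U = 0)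
    (A B : V →ₗ[ℝ] ℝ)
    (hHGR : ∀ U X Y Z W,
      D U X Y Z W = A U * R X Y Z W + B U * KN (fun a c => g a c) Ric X Y Z W)
    (hr0 : r = 0)
    :
    ∀ X, A (Ric₀ X) + ((n : ℝ) - 2) * B (Ric₀ X) = 0 := by
  intro X
  have h := hgr_contracted_bianchi hdual hR_anti hR_pair hRic hRic₀ hBianchi hHGR X
  rw [traceForm, ← hr, hr0, zero_mul] at h
  linarith

theorem hgr_zero_scalar_annihilates_ricci_image {V : Type*} [AddCommGroup V] [Module ℝ V]
    (n : ℕ) (hn : 3 ≤ n)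
    (b : Module.Basis (Fin n) ℝ V) (e' : Fin n → V)
    (g : V →ₗ[ℝ] V →ₗ[ℝ] ℝ)
    (hg_symm : ∀ X Y, g X Y = g Y X)
    (hg_nd : ∀ X, (∀ Y, g X Y = 0) → X = 0)
    (hdual : ∀ i j, g (b i) (e' j) = if i = j then (1 : ℝ) else 0)
    (R : V →ₗ[ℝ] V →ₗ[ℝ] V →ₗ[ℝ] V →ₗ[ℝ] ℝ)
    (hR_ne : R ≠ 0)
    (hR_anti : ∀ X Y Z W, R X Y Z W = - R Y X Z W)
    (hR_pair : ∀ X Y Z W, R X Y Z W = R Z W X Y)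
    (Ric : V → V → ℝ)
    (hRic : ∀ X Z, Ric X Z = ∑ i, R X (b i) Z (e' i))
    (r : ℝ) (hr : r = ∑ i, Ric (b i) (e' i))
    (Ric₀ : V →ₗ[ℝ] V)
    (hRic₀ : ∀ X Y, g (Ric₀ X) Y = Ric X Y)
    (D : V →ₗ[ℝ] V →ₗ[ℝ] V →ₗ[ℝ] V →ₗ[ℝ] V →ₗ[ℝ] ℝ)
    (hBianchi : ∀ X Y Z W U, D X Y Z W U + D Y Z X W U + D Z X Y W U = 0)
    (A B : V →ₗ[ℝ] ℝ) (hA : A ≠ 0) (hB : B ≠ 0)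
    (hHGR : ∀ U X Y Z W,
      D U X Y Z W = A U * R X Y Z W + B U * KN (fun a c => g a c) Ric X Y Z W)
    (hr0 : r = 0)
    :
    ∀ X, A (Ric₀ X) + ((n : ℝ) - 2) * B (Ric₀ X) = 0 :=
  hgr_zero_scalar_annihilates_ricci_image_general n b e' g hdual R hR_anti hR_pair Ric hRic r hr
    Ric₀ hRic₀ D hBianchi A B hHGR hr0
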